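/- arXiv:1105.2673 — 3 statements merged into one kernel-verified Lean document; each statement's English description precedes it below -/
import Mathlib

section
/- For any integer n and nonnegative integer a, sum_{s=0}^{a} (-1)^s * q^{C(s,2)} * [n choose s]_q = q^{n*a} * [a - n choose a]_q, where C(s,2) = s(s-1)/2. -/
/-- Gaussian binomial coefficient with (possibly negative) integer upper
argument: `[n choose i]_q = ∏_{j=0}^{i-1} (q^{n-j} - 1)/(q^{i-j} - 1)`. -/
def gauss (q : ℚ) (n : ℤ) (i : ℕ) : ℚ :=
  ∏ j ∈ Finset.range i, (q ^ (n - (j : ℤ)) - 1) / (q ^ ((i : ℤ) - (j : ℤ)) - 1)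

private lemma sum_range_id_choose (i : ℕ) : ∑ j ∈ Finset.range i, j = i.choose 2 := by
  induction i with
  | zero => simp
  | succ k ih =>
    rw [Finset.sum_range_succ, ih, Nat.choose_succ_succ, Nat.choose_one_right, Nat.add_comm]

private lemma prod_reflect (f : ℤ → ℚ) (m : ℕ) :
    ∏ j ∈ Finset.range m, f ((m : ℤ) - (j : ℤ)) = ∏ j ∈ Finset.range m, f ((j : ℤ) + 1) := by
  rw [← Finset.prod_range_reflect (fun j => f ((j : ℤ) + 1)) m]
  refine Finset.prod_congr rfl fun j hj => ?_
  have hj' := Finset.mem_range.mp hj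
  congr 1
  omega

private lemma prodA (q : ℚ) (hq0 : q ≠ 0) (n : ℤ) (i : ℕ) :
    (-1 : ℚ) ^ i * q ^ (i.choose 2) * ∏ j ∈ Finset.range i, (q ^ (n - (j : ℤ)) - 1)
      = ∏ j ∈ Finset.range i, (q ^ (j : ℤ) - q ^ n) := by
  have h : ∀ j ∈ Finset.range i,
      q ^ (j : ℤ) - q ^ n = (-1) * q ^ (j : ℕ) * (q ^ (n - (j : ℤ)) - 1) := by
    intro j _
    have hj : q ^ (j : ℕ) * q ^ (n - (j : ℤ)) = q ^ n := by
      rw [← zpow_natCast q j, ← zpow_add₀ hq0]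
      ring_nf
    rw [zpow_natCast q j]
    linear_combination hj
  rw [Finset.prod_congr rfl h, Finset.prod_mul_distrib, Finset.prod_mul_distrib,
    Finset.prod_const, Finset.prod_pow_eq_pow_sum, sum_range_id_choose, Finset.card_range]

private lemma gauss_eq (q : ℚ) (n : ℤ) (i : ℕ) :
    gauss q n i = (∏ j ∈ Finset.range i, (q ^ (n - (j : ℤ)) - 1)) /
      (∏ j ∈ Finset.range i, (q ^ ((j : ℤ) + 1) - 1)) := by
  rw [gauss, Finset.prod_div_distrib, prod_reflect (fun m => q ^ m - 1) i]

private lemma key_sum (q : ℚ) (hq : 1 < q) (n : ℤ) (b : ℕ) :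
    ∑ s ∈ Finset.range (b + 1), (-1 : ℚ) ^ s * q ^ (s.choose 2) * gauss q n s
      = (∏ j ∈ Finset.range b, (q ^ ((j : ℤ) + 1) - q ^ n)) /
        (∏ j ∈ Finset.range b, (q ^ ((j : ℤ) + 1) - 1)) := by
  have hq0 : q ≠ 0 := (zero_lt_one.trans hq).ne'
  have hDpos : ∀ k : ℕ, (0 : ℚ) < q ^ ((k : ℤ) + 1) - 1 := by
    intro k
    have h1 : (1 : ℚ) < q ^ ((k : ℤ) + 1) := one_lt_zpow₀ hq (show (0:ℤ) < (k : ℤ) + 1 by omega)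
    linarith
  have hDne : ∀ m : ℕ, (∏ j ∈ Finset.range m, (q ^ ((j : ℤ) + 1) - 1)) ≠ 0 := by
    intro m
    exact Finset.prod_ne_zero_iff.mpr fun j _ => (hDpos j).ne'
  induction b with
  | zero => simp [gauss]
  | succ b ih =>
    rw [Finset.sum_range_succ, ih, gauss_eq q n (b + 1)]
    have hA : (-1 : ℚ) ^ (b + 1) * q ^ ((b + 1).choose 2) *
        ∏ j ∈ Finset.range (b + 1), (q ^ (n - (j : ℤ)) - 1)
        = (∏ j ∈ Finset.range b, (q ^ ((j : ℤ) + 1) - q ^ n)) * (1 - q ^ n) := by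
      rw [prodA q hq0 n (b + 1), Finset.prod_range_succ']
      have hc : ∀ j ∈ Finset.range b,
          (q ^ ((j + 1 : ℕ) : ℤ) - q ^ n) = q ^ ((j : ℤ) + 1) - q ^ n := by
        intro j _
        norm_cast
      rw [Finset.prod_congr rfl hc]
      norm_num
    rw [← mul_div_assoc, hA]
    simp only [Finset.prod_range_succ]
    have hb := (hDpos b).ne'
    have hb' := hDne b
    field_simp
    ring

theorem gauss_alt_sum (q : ℚ) (hq : 1 < q) (n : ℤ) (a : ℕ) :
    ∑ s ∈ Finset.range (a + 1), (-1 : ℚ) ^ s * q ^ (s.choose 2) * gauss q n s =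
      q ^ (n * a) * gauss q ((a : ℤ) - n) a := by
  have hq0 : q ≠ 0 := (zero_lt_one.trans hq).ne'
  rw [key_sum q hq n a, gauss]
  have h1 : q ^ (n * (a : ℤ)) = ∏ _j ∈ Finset.range a, q ^ n := by
    rw [Finset.prod_const, Finset.card_range, ← zpow_natCast (q ^ n) a, ← zpow_mul]
  rw [h1, ← Finset.prod_mul_distrib]
  have h2 : ∀ j ∈ Finset.range a,
      q ^ n * ((q ^ ((a : ℤ) - n - (j : ℤ)) - 1) / (q ^ ((a : ℤ) - (j : ℤ)) - 1))
        = (q ^ ((a : ℤ) - (j : ℤ)) - q ^ n) / (q ^ ((a : ℤ) - (j : ℤ)) - 1) := by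
    intro j _
    rw [mul_div_assoc']
    congr 1
    rw [mul_sub, mul_one, ← zpow_add₀ hq0]
    ring_nf
  rw [Finset.prod_congr rfl h2,
    prod_reflect (fun m => (q ^ m - q ^ n) / (q ^ m - 1)) a, Finset.prod_div_distrib]
end

section
/- Let m, a, t be nonnegative integers with a >= m and a >= t. Then sum_{s=0}^{m} (-1)^s * q^{C(s,2)} * [m choose s]_q * [a - s choose t]_q = q^{m*(a-t)} * [a - m choose a - t]_q. -/
noncomputable def qfact (q : ℚ) (k : ℕ) : ℚ := ∏ j ∈ Finset.range k, (q ^ (j + 1) - 1)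

variable {q : ℚ}

lemma qfact_zero : qfact q 0 = 1 := rfl

lemma qfact_succ (k : ℕ) : qfact q (k+1) = qfact q k * (q ^ (k+1) - 1) :=
  Finset.prod_range_succ _ _

lemma qfact_pos (hq : 1 < q) (k : ℕ) : 0 < qfact q k := by
  apply Finset.prod_pos
  intro j _
  have : 1 < q ^ (j+1) := one_lt_pow₀ hq (Nat.succ_ne_zero j)
  linarith

lemma qfact_ne_zero (hq : 1 < q) (k : ℕ) : qfact q k ≠ 0 := (qfact_pos hq k).ne'

lemma num_eq (n k : ℕ) (h : k ≤ n) :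
    (∏ j ∈ Finset.range k, (q ^ (n - j) - 1)) * qfact q (n - k) = qfact q n := by
  induction k with
  | zero => simp
  | succ k ih =>
    rw [Finset.prod_range_succ]
    have hk : k ≤ n := by omega
    have h1 : n - (k+1) + 1 = n - k := by omega
    calc (∏ j ∈ Finset.range k, (q ^ (n - j) - 1)) * (q ^ (n - k) - 1) * qfact q (n - (k+1))
        = (∏ j ∈ Finset.range k, (q ^ (n - j) - 1)) * (qfact q (n - (k+1)) * (q ^ (n-(k+1)+1) - 1)) := by
          rw [h1]; ring
      _ = (∏ j ∈ Finset.range k, (q ^ (n - j) - 1)) * qfact q (n - k) := by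
          rw [← qfact_succ, h1]
      _ = qfact q n := ih hk

lemma den_eq (k : ℕ) : (∏ j ∈ Finset.range k, (q ^ (k - j) - 1)) = qfact q k := by
  rw [← Finset.prod_range_reflect]
  apply Finset.prod_congr rfl
  intro j hj
  simp only [Finset.mem_range] at hj
  congr 2
  omega

lemma gauss_eq_s4 (hq : 1 < q) {n k : ℕ} (h : k ≤ n) :
    gauss q (n : ℤ) k = qfact q n / (qfact q k * qfact q (n - k)) := by
  unfold gauss
  have : ∀ j ∈ Finset.range k,
      (q ^ ((n : ℤ) - (j : ℤ)) - 1) / (q ^ ((k : ℤ) - (j : ℤ)) - 1)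
        = (q ^ (n - j) - 1) / (q ^ (k - j) - 1) := by
    intro j hj
    simp only [Finset.mem_range] at hj
    have h1 : (n : ℤ) - (j : ℤ) = ((n - j : ℕ) : ℤ) := by omega
    have h2 : (k : ℤ) - (j : ℤ) = ((k - j : ℕ) : ℤ) := by omega
    rw [h1, h2, zpow_natCast, zpow_natCast]
  rw [Finset.prod_congr rfl this, Finset.prod_div_distrib, den_eq, ← num_eq n k h]
  have h1 := qfact_ne_zero hq k
  have h2 := qfact_ne_zero hq (n-k)
  field_simp

lemma gauss_zero (n : ℤ) : gauss q n 0 = 1 := by simp [gauss]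

lemma gauss_self (hq : 1 < q) (n : ℕ) : gauss q (n : ℤ) n = 1 := by
  rw [gauss_eq_s4 hq le_rfl]
  simp [qfact_zero]
  exact qfact_ne_zero hq n

lemma gauss_eq_zero {n k : ℕ} (h : n < k) : gauss q (n : ℤ) k = 0 := by
  unfold gauss
  apply Finset.prod_eq_zero (Finset.mem_range.mpr h)
  simp

lemma pascal1 (hq : 1 < q) (n k : ℕ) :
    gauss q ((n + 1 : ℕ) : ℤ) (k+1) = gauss q (n : ℤ) (k+1) + q ^ (n - k) * gauss q (n : ℤ) k := by
  rcases Nat.lt_or_ge n k with h | h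
  · rw [gauss_eq_zero (by omega : n + 1 < k + 1), gauss_eq_zero (by omega : n < k + 1),
      gauss_eq_zero h]
    ring
  rcases Nat.eq_or_lt_of_le h with heq | h
  · subst heq
    rw [gauss_self hq, gauss_eq_zero (by omega : k < k + 1), gauss_self hq]
    simp
  · -- k < n, so k + 1 ≤ n
    have hk1 : k + 1 ≤ n := h
    rw [gauss_eq_s4 hq (by omega : k + 1 ≤ n + 1), gauss_eq_s4 hq hk1, gauss_eq_s4 hq (by omega : k ≤ n)]
    have e1 : n + 1 - (k + 1) = n - k := by omega
    have e2 : n - (k + 1) = (n - k) - 1 := by omega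
    have e3 : n - k = (n - k - 1) + 1 := by omega
    rw [e1, e2, qfact_succ n, qfact_succ k]
    have e4 : qfact q (n - k) = qfact q (n - k - 1) * (q ^ (n - k) - 1) := by
      conv_lhs => rw [e3]
      rw [qfact_succ]
      rw [← e3]
    rw [e4]
    have hfn := qfact_ne_zero hq n
    have hfk := qfact_ne_zero hq k
    have hf1 := qfact_ne_zero hq (n - k - 1)
    have hq1 : q ^ (k + 1) - 1 ≠ 0 := by
      have : 1 < q ^ (k+1) := one_lt_pow₀ hq (Nat.succ_ne_zero k); linarith
    have hq2 : q ^ (n - k) - 1 ≠ 0 := by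
      have : 1 < q ^ (n-k) := one_lt_pow₀ hq (by omega); linarith
    have key : q ^ (n + 1) = q ^ (n - k) * q ^ (k + 1) := by
      rw [← pow_add]; congr 1; omega
    rw [key]
    field_simp
    ring

lemma pascal2 (hq : 1 < q) (n k : ℕ) :
    gauss q ((n + 1 : ℕ) : ℤ) (k+1) = q ^ (k+1) * gauss q (n : ℤ) (k+1) + gauss q (n : ℤ) k := by
  rcases Nat.lt_or_ge n k with h | h
  · rw [gauss_eq_zero (by omega : n + 1 < k + 1), gauss_eq_zero (by omega : n < k + 1),
      gauss_eq_zero h]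
    ring
  rcases Nat.eq_or_lt_of_le h with heq | h
  · subst heq
    rw [gauss_self hq, gauss_eq_zero (by omega : k < k + 1), gauss_self hq]
    simp
  · have hk1 : k + 1 ≤ n := h
    rw [gauss_eq_s4 hq (by omega : k + 1 ≤ n + 1), gauss_eq_s4 hq hk1, gauss_eq_s4 hq (by omega : k ≤ n)]
    have e1 : n + 1 - (k + 1) = n - k := by omega
    have e2 : n - (k + 1) = (n - k) - 1 := by omega
    have e3 : n - k = (n - k - 1) + 1 := by omega
    rw [e1, e2, qfact_succ n, qfact_succ k]
    have e4 : qfact q (n - k) = qfact q (n - k - 1) * (q ^ (n - k) - 1) := by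
      conv_lhs => rw [e3]
      rw [qfact_succ]
      rw [← e3]
    rw [e4]
    have hfn := qfact_ne_zero hq n
    have hfk := qfact_ne_zero hq k
    have hf1 := qfact_ne_zero hq (n - k - 1)
    have hq1 : q ^ (k + 1) - 1 ≠ 0 := by
      have : 1 < q ^ (k+1) := one_lt_pow₀ hq (Nat.succ_ne_zero k); linarith
    have hq2 : q ^ (n - k) - 1 ≠ 0 := by
      have : 1 < q ^ (n-k) := one_lt_pow₀ hq (by omega); linarith
    have key : q ^ (n + 1) = q ^ (n - k) * q ^ (k + 1) := by
      rw [← pow_add]; congr 1; omega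
    rw [key]
    field_simp
    ring

lemma gauss_symm (hq : 1 < q) {n k : ℕ} (h : k ≤ n) :
    gauss q (n : ℤ) k = gauss q (n : ℤ) (n - k) := by
  rw [gauss_eq_s4 hq h, gauss_eq_s4 hq (by omega : n - k ≤ n)]
  have : n - (n - k) = k := by omega
  rw [this, mul_comm]

lemma main_aux (hq : 1 < q) : ∀ m a t : ℕ, m ≤ a → t ≤ a →
    ∑ s ∈ Finset.range (m + 1),
        (-1 : ℚ) ^ s * q ^ (s.choose 2) * gauss q (m : ℤ) s * gauss q ((a - s : ℕ) : ℤ) t =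
      q ^ (m * (a - t)) * gauss q ((a - m : ℕ) : ℤ) (a - t) := by
  intro m
  induction m with
  | zero =>
    intro a t ham hta
    rw [Finset.sum_range_one]
    simp only [Nat.sub_zero, Nat.zero_mul, pow_zero, Nat.choose_zero_right, one_mul,
      Nat.cast_zero]
    rw [gauss_zero]
    rw [gauss_symm hq hta]
    norm_num
  | succ m ih =>
    intro a t ham hta
    rcases Nat.eq_or_lt_of_le hta with heq | ht
    · -- t = a
      subst heq
      have h0 : t - t = 0 := by omega
      rw [h0, gauss_zero, Nat.mul_zero, pow_zero, mul_one]
      rw [Finset.sum_eq_single_of_mem 0 (Finset.mem_range.mpr (by omega))]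
      · simp only [pow_zero, Nat.choose_zero_right, one_mul, Nat.sub_zero, Nat.cast_zero]
        rw [gauss_zero, gauss_self hq]
        norm_num
      · intro b _ hb
        have : t - b < t := by omega
        rw [gauss_eq_zero this]
        ring
    · -- t < a
      have key : ∀ s ∈ Finset.range (m + 1),
          (-1 : ℚ) ^ (s+1) * q ^ ((s+1).choose 2) * gauss q ((m+1 : ℕ) : ℤ) (s+1) *
              gauss q ((a - (s+1) : ℕ) : ℤ) t
            = (-1 : ℚ) ^ (s+1) * q ^ ((s+1).choose 2) * gauss q (m : ℤ) (s+1) *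
                gauss q ((a - 1 - s : ℕ) : ℤ) t
              + (-(q ^ m)) * ((-1 : ℚ) ^ s * q ^ (s.choose 2) * gauss q (m : ℤ) s *
                gauss q ((a - 1 - s : ℕ) : ℤ) t) := by
        intro s hs
        simp only [Finset.mem_range] at hs
        have hsub : a - (s+1) = a - 1 - s := by omega
        rw [hsub, pascal1 hq m s]
        have hch : (s+1).choose 2 = s.choose 2 + s := by
          rw [Nat.choose_succ_succ]
          simp [Nat.choose_one_right]
          omega
        have hpow : q ^ ((s+1).choose 2) * q ^ (m - s) = q ^ (s.choose 2) * q ^ m := by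
          rw [← pow_add, ← pow_add, hch]
          congr 1
          omega
        have hsgn : (-1 : ℚ) ^ (s+1) = -(-1 : ℚ) ^ s := by rw [pow_succ]; ring
        rw [hsgn]
        linear_combination (-(-1:ℚ)^s * gauss q (m:ℤ) s * gauss q ((a-1-s : ℕ):ℤ) t) * hpow
      rw [Finset.sum_range_succ']
      rw [Finset.sum_congr rfl key, Finset.sum_add_distrib, ← Finset.mul_sum]
      rw [ih (a-1) t (by omega) (by omega)]
      have hf0 : (-1 : ℚ) ^ 0 * q ^ (Nat.choose 0 2) * gauss q ((m+1 : ℕ) : ℤ) 0 *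
          gauss q ((a - 0 : ℕ) : ℤ) t
          = (-1 : ℚ) ^ 0 * q ^ (Nat.choose 0 2) * gauss q (m : ℤ) 0 *
          gauss q ((a - 0 : ℕ) : ℤ) t := by
        rw [gauss_zero, gauss_zero]
      have hstep : (∑ s ∈ Finset.range (m + 1),
            (-1 : ℚ) ^ (s+1) * q ^ ((s+1).choose 2) * gauss q (m : ℤ) (s+1) *
              gauss q ((a - 1 - s : ℕ) : ℤ) t)
          + (-1 : ℚ) ^ 0 * q ^ (Nat.choose 0 2) * gauss q ((m+1 : ℕ) : ℤ) 0 *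
            gauss q ((a - 0 : ℕ) : ℤ) t
          = ∑ s ∈ Finset.range (m + 1 + 1),
            (-1 : ℚ) ^ s * q ^ (s.choose 2) * gauss q (m : ℤ) s *
              gauss q ((a - s : ℕ) : ℤ) t := by
        rw [hf0]
        conv_rhs => rw [Finset.sum_range_succ']
        congr 1
        apply Finset.sum_congr rfl
        intro s hs
        have : a - 1 - s = a - (s+1) := by omega
        rw [this]
      rw [add_right_comm, hstep, Finset.sum_range_succ,
        gauss_eq_zero (Nat.lt_succ_self m), ih a t (by omega) hta]
      have e5 : a - m - 1 + 1 = a - m := by omega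
      have e6 : a - t - 1 + 1 = a - t := by omega
      have hp := pascal2 hq (a - m - 1) (a - t - 1)
      rw [e5, e6] at hp
      have e7 : a - (m + 1) = a - m - 1 := by omega
      have e9 : a - 1 - t = a - t - 1 := by omega
      have e8 : a - 1 - m = a - m - 1 := by omega
      rw [e7, e9, e8, hp]
      have epow1 : q ^ m * q ^ (m * (a - t - 1)) = q ^ (m * (a - t)) := by
        rw [← pow_add]
        congr 1
        obtain ⟨e, he⟩ : ∃ e, a - t = e + 1 := ⟨a - t - 1, by omega⟩
        rw [show a - t - 1 = e by omega, he, Nat.mul_succ]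
        omega
      have epow2 : q ^ (m * (a - t)) * q ^ (a - t) = q ^ ((m + 1) * (a - t)) := by
        rw [← pow_add]
        congr 1
        rw [Nat.succ_mul]
      linear_combination gauss q ((a - m - 1 : ℕ) : ℤ) (a - t) * epow2
        - gauss q ((a - m - 1 : ℕ) : ℤ) (a - t - 1) * epow1

theorem gauss_alt_sum_prod' (q : ℚ) (hq : 1 < q) (m a t : ℕ)
    (ham : m ≤ a) (hta : t ≤ a) :
    ∑ s ∈ Finset.range (m + 1),
        (-1 : ℚ) ^ s * q ^ (s.choose 2) * gauss q (m : ℤ) s *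
          gauss q ((a : ℤ) - (s : ℤ)) t =
      q ^ (m * (a - t)) * gauss q ((a : ℤ) - (m : ℤ)) (a - t) := by
  have h1 : ∀ s ∈ Finset.range (m + 1),
      (-1 : ℚ) ^ s * q ^ (s.choose 2) * gauss q (m : ℤ) s * gauss q ((a : ℤ) - (s : ℤ)) t
        = (-1 : ℚ) ^ s * q ^ (s.choose 2) * gauss q (m : ℤ) s * gauss q ((a - s : ℕ) : ℤ) t := by
    intro s hs
    simp only [Finset.mem_range] at hs
    congr 2
    omega
  rw [Finset.sum_congr rfl h1, show ((a : ℤ) - (m : ℤ)) = ((a - m : ℕ) : ℤ) by omega]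
  exact main_aux hq m a t ham hta
end

section
/- For nonnegative integers a >= m, sum_{s=0}^{m} (-1)^s * q^{C(s,2)} * [m choose s]_q * [a - s choose a - m]_q = q^{m^2} * [a - m choose m]_q. -/
namespace GaussAux

noncomputable def qfac (q : ℚ) (n : ℕ) : ℚ := ∏ t ∈ Finset.range n, (q ^ (t + 1) - 1)

variable {q : ℚ}

lemma zpow_ne (hq : 1 < q) {k : ℤ} (hk : 0 < k) : q ^ k - 1 ≠ 0 :=
  sub_ne_zero.mpr (ne_of_gt (one_lt_zpow₀ hq hk))

lemma pow_ne (hq : 1 < q) (t : ℕ) : q ^ (t + 1) - 1 ≠ 0 :=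
  sub_ne_zero.mpr (ne_of_gt (one_lt_pow₀ hq (by omega)))

lemma qfac_ne (hq : 1 < q) (n : ℕ) : qfac q n ≠ 0 :=
  Finset.prod_ne_zero_iff.mpr fun t _ => pow_ne hq t

lemma qfac_succ (n : ℕ) : qfac q (n + 1) = qfac q n * (q ^ (n + 1) - 1) :=
  Finset.prod_range_succ _ n

lemma gauss_zero (n : ℤ) : gauss q n 0 = 1 := by simp [gauss]

lemma den_eq (i : ℕ) : ∏ j ∈ Finset.range i, (q ^ ((i : ℤ) - (j : ℤ)) - 1) = qfac q i := by
  rw [qfac, ← Finset.prod_range_reflect (fun t => (q ^ (t + 1) - 1)) i]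
  refine Finset.prod_congr rfl fun j hj => ?_
  rw [Finset.mem_range] at hj
  have h1 : (i : ℤ) - (j : ℤ) = ((i - 1 - j + 1 : ℕ) : ℤ) := by push_cast; omega
  rw [h1, zpow_natCast]

lemma gauss_eq_div (n : ℤ) (i : ℕ) :
    gauss q n i = (∏ j ∈ Finset.range i, (q ^ (n - (j : ℤ)) - 1)) / qfac q i := by
  rw [gauss, Finset.prod_div_distrib, den_eq]

lemma gauss_eq_zero {n i : ℕ} (h : n < i) : gauss q (n : ℤ) i = 0 := by
  rw [gauss_eq_div, Finset.prod_eq_zero (Finset.mem_range.mpr h) (by simp), zero_div]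

lemma R1 (n : ℤ) (i : ℕ) :
    gauss q n (i + 1) = (q ^ n - 1) / (q ^ ((i : ℤ) + 1) - 1) * gauss q (n - 1) i := by
  rw [gauss_eq_div, gauss_eq_div, Finset.prod_range_succ' (fun j => (q ^ (n - (j:ℤ)) - 1)) i,
    qfac_succ]
  have h : ∀ j ∈ Finset.range i,
      (q ^ (n - ((j + 1 : ℕ) : ℤ)) - 1) = (q ^ (n - 1 - (j : ℤ)) - 1) := by
    intro j hj
    have : (n - ((j + 1 : ℕ) : ℤ)) = n - 1 - (j : ℤ) := by push_cast; ring
    rw [this]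
  rw [Finset.prod_congr rfl h]
  have hz : (q ^ ((i:ℕ)+1) : ℚ) = q ^ ((i : ℤ) + 1) := by
    rw [← zpow_natCast]; norm_num
  rw [hz]
  have h0 : (q ^ (n - ((0:ℕ) : ℤ)) - 1) = q ^ n - 1 := by norm_num
  rw [h0, div_mul_div_comm]
  ring

lemma R1' (hq : 1 < q) (n : ℤ) (i : ℕ) :
    (q ^ ((i : ℤ) + 1) - 1) * gauss q n (i + 1) = (q ^ n - 1) * gauss q (n - 1) i := by
  have hD : q ^ ((i : ℤ) + 1) - 1 ≠ 0 := zpow_ne hq (by positivity)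
  rw [R1]
  field_simp

lemma R2 (hq : 1 < q) (n : ℤ) (i : ℕ) :
    (q ^ ((i : ℤ) + 1) - 1) * gauss q n (i + 1) = (q ^ (n - i) - 1) * gauss q n i := by
  rw [gauss_eq_div, gauss_eq_div, Finset.prod_range_succ (fun j => (q ^ (n - (j:ℤ)) - 1)) i,
    qfac_succ]
  have hz : (q ^ ((i:ℕ)+1) : ℚ) = q ^ ((i : ℤ) + 1) := by
    rw [← zpow_natCast]; norm_num
  rw [← hz]
  field_simp [qfac_ne hq, pow_ne hq i]

lemma pascal2 (hq : 1 < q) : ∀ (i : ℕ) (n : ℤ),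
    gauss q n (i + 1) = q ^ ((i : ℤ) + 1) * gauss q (n - 1) (i + 1) + gauss q (n - 1) i := by
  have hq0 : q ≠ 0 := ne_of_gt (lt_trans one_pos hq)
  intro i
  induction i with
  | zero =>
    intro n
    have hD : q ^ (((0:ℕ) : ℤ) + 1) - 1 ≠ 0 := zpow_ne hq (by positivity)
    have e1 : q ^ (((0:ℕ):ℤ) + 1) * q ^ (n - 1) = q ^ n := by
      rw [← zpow_add₀ hq0]; congr 1; push_cast; ring
    have h1 := R1' hq n 0
    have h2 := R1' hq (n-1) 0
    have gz : gauss q (n-1) 0 = 1 := gauss_zero _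
    have gz2 : gauss q (n-1-1) 0 = 1 := gauss_zero _
    apply mul_left_cancel₀ hD
    linear_combination h1 - q ^ (((0:ℕ):ℤ) + 1) * h2 +
      (q ^ n - q ^ (((0:ℕ):ℤ) + 1)) * gz -
      q ^ (((0:ℕ):ℤ) + 1) * (q ^ (n-1) - 1) * gz2 - e1
  | succ i ih =>
    intro n
    have hD : q ^ (((i+1:ℕ) : ℤ) + 1) - 1 ≠ 0 := zpow_ne hq (by positivity)
    have e1 : q ^ n * q ^ ((i:ℤ) + 1) = q ^ (((i+1:ℕ):ℤ) + 1) * q ^ (n - 1) := by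
      rw [← zpow_add₀ hq0, ← zpow_add₀ hq0]; congr 1; push_cast; ring
    have e2 : q ^ (((i+1:ℕ):ℤ) + 1) * q ^ (n - 1 - 1 - (i:ℤ)) = q ^ n := by
      rw [← zpow_add₀ hq0]; congr 1; push_cast; ring
    have h1 := R1' hq n (i+1)
    have h2 := R1' hq (n-1) (i+1)
    have h3 := ih (n-1)
    have hr := R2 hq (n-1-1) i
    apply mul_left_cancel₀ hD
    linear_combination h1 - q ^ (((i+1:ℕ):ℤ) + 1) * h2 +
      (q ^ n - q ^ (((i+1:ℕ):ℤ) + 1)) * h3 - q ^ (((i+1:ℕ):ℤ) + 1) * hr +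
      gauss q (n-1-1) (i+1) * e1 - gauss q (n-1-1) i * e2

lemma num_eq (hq : 1 < q) : ∀ (i n : ℕ), i ≤ n →
    qfac q (n - i) * ∏ j ∈ Finset.range i, (q ^ ((n:ℤ) - (j:ℤ)) - 1) = qfac q n := by
  intro i
  induction i with
  | zero => intro n _; simp
  | succ i ih =>
    intro n h
    rw [Finset.prod_range_succ]
    have e1 : (q ^ ((n:ℤ) - (i:ℤ)) - 1) = q ^ ((n - i - 1) + 1) - 1 := by
      rw [← zpow_natCast q (n - i - 1 + 1)]; congr 2; push_cast; omega
    have e2 : n - (i+1) = n - i - 1 := by omega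
    have e4 : qfac q (n - i) = qfac q (n - i - 1) * (q ^ ((n - i - 1) + 1) - 1) := by
      rw [← qfac_succ]; congr 1; omega
    rw [e2, e1]
    calc qfac q (n - i - 1) *
          ((∏ j ∈ Finset.range i, (q ^ ((n:ℤ) - (j:ℤ)) - 1)) * (q ^ ((n - i - 1) + 1) - 1))
        = (qfac q (n - i - 1) * (q ^ ((n - i - 1) + 1) - 1)) *
            ∏ j ∈ Finset.range i, (q ^ ((n:ℤ) - (j:ℤ)) - 1) := by ring
      _ = qfac q (n - i) * ∏ j ∈ Finset.range i, (q ^ ((n:ℤ) - (j:ℤ)) - 1) := by rw [← e4]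
      _ = qfac q n := ih n (by omega)

lemma gauss_qfac (hq : 1 < q) {n i : ℕ} (h : i ≤ n) :
    gauss q (n:ℤ) i = qfac q n / (qfac q i * qfac q (n - i)) := by
  rw [gauss_eq_div]
  have hn := num_eq hq i n h
  rw [div_eq_div_iff (qfac_ne hq i) (mul_ne_zero (qfac_ne hq i) (qfac_ne hq (n-i)))]
  linear_combination qfac q i * hn

lemma sym (hq : 1 < q) {s m a : ℕ} (h1 : s ≤ m) (h2 : m ≤ a) :
    gauss q ((a:ℤ) - (s:ℤ)) (a - m) = gauss q ((a:ℤ) - (s:ℤ)) (m - s) := by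
  have e : (a:ℤ) - (s:ℤ) = ((a - s : ℕ) : ℤ) := by push_cast; omega
  rw [e, gauss_qfac hq (by omega), gauss_qfac hq (by omega)]
  rw [show a - s - (a - m) = m - s from by omega, show a - s - (m - s) = a - m from by omega,
    mul_comm]


/-- summand with an extra `q^s` -/
noncomputable def U (q : ℚ) (a : ℤ) (c m : ℕ) (s : ℕ) : ℚ :=
  (-1:ℚ)^s * (q ^ (s.choose 2) * q ^ s) * gauss q (m:ℤ) s * gauss q (a - (s:ℤ)) (c - s)

noncomputable def V (q : ℚ) (a : ℤ) (c m : ℕ) (t : ℕ) : ℚ :=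
  (-1:ℚ)^t * (q ^ (t.choose 2) * q ^ t) * gauss q (m:ℤ) t * gauss q (a - (t:ℤ) - 1) (c - t - 1)

lemma split (hq : 1 < q) (m c : ℕ) (a : ℤ) (t : ℕ) :
    (-1:ℚ)^(t+1) * q ^ ((t+1).choose 2) * gauss q ((m+1 : ℕ) : ℤ) (t+1) *
      gauss q (a - ((t+1 : ℕ) : ℤ)) (c - (t+1))
    = U q a c m (t+1) - V q a c m t := by
  have hp := pascal2 hq t ((m+1 : ℕ) : ℤ)
  have em : ((m+1:ℕ):ℤ) - 1 = (m:ℤ) := by push_cast; ring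
  rw [em] at hp
  have ea : a - ((t+1:ℕ):ℤ) = a - (t:ℤ) - 1 := by push_cast; ring
  have ec : c - (t+1) = c - t - 1 := by omega
  simp only [U, V]
  rw [hp, ea, ec]
  have ezp : q ^ ((t:ℤ)+1) = q ^ (t+1) := by
    rw [← zpow_natCast q (t+1)]; norm_num
  have ech := Nat.choose_succ_succ' t 1
  rw [Nat.choose_one_right] at ech
  rw [ezp, ech]
  ring

lemma uv (hq : 1 < q) {m c : ℕ} (h : m + 1 ≤ c) (a : ℤ) {s : ℕ} (hs : s ≤ m) :
    U q a c m s - V q a c m s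
      = q ^ c * ((-1:ℚ)^s * q ^ (s.choose 2) * gauss q (m:ℤ) s *
          gauss q (a - 1 - (s:ℤ)) (c - s)) := by
  obtain ⟨d, hd⟩ : ∃ d, c - s = d + 1 := ⟨c - s - 1, by omega⟩
  have hd2 : c - s - 1 = d := by omega
  have hp := pascal2 hq d (a - (s:ℤ))
  simp only [U, V]
  rw [hd2, hd, hp, show a - 1 - (s:ℤ) = a - (s:ℤ) - 1 from by ring]
  have ezp : q ^ ((d:ℤ)+1) = q ^ (d+1) := by
    rw [← zpow_natCast q (d+1)]; norm_num
  have epow : q ^ s * q ^ (d+1) = q ^ c := by rw [← pow_add]; congr 1; omega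
  rw [ezp]
  linear_combination ((-1:ℚ)^s * q ^ (s.choose 2) * gauss q (m:ℤ) s *
    gauss q (a - (s:ℤ) - 1) (d+1)) * epow

lemma main (hq : 1 < q) : ∀ (m c : ℕ), m ≤ c → ∀ a : ℤ,
    ∑ s ∈ Finset.range (m+1),
        (-1:ℚ)^s * q ^ (s.choose 2) * gauss q (m:ℤ) s * gauss q (a - (s:ℤ)) (c - s)
      = q ^ (m * c) * gauss q (a - (m:ℤ)) c := by
  intro m
  induction m with
  | zero => intro c _ a; simp [gauss_zero]
  | succ m ih =>
    intro c hc a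
    have hc' : m ≤ c := by omega
    rw [Finset.sum_range_succ']
    have hsplit : ∀ t ∈ Finset.range (m+1),
        (-1:ℚ)^(t+1) * q ^ ((t+1).choose 2) * gauss q ((m+1 : ℕ) : ℤ) (t+1) *
          gauss q (a - ((t+1 : ℕ) : ℤ)) (c - (t+1)) = U q a c m (t+1) - V q a c m t :=
      fun t _ => split hq m c a t
    rw [Finset.sum_congr rfl hsplit, Finset.sum_sub_distrib]
    have hf0 : (-1:ℚ)^0 * q ^ (Nat.choose 0 2) * gauss q ((m+1 : ℕ) : ℤ) 0 *
        gauss q (a - ((0 : ℕ) : ℤ)) (c - 0) = U q a c m 0 := by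
      simp [U, gauss_zero]
    rw [hf0]
    have hUlast : U q a c m (m+1) = 0 := by
      simp only [U]
      rw [gauss_eq_zero (Nat.lt_succ_self m)]
      ring
    have key : ∑ t ∈ Finset.range (m+1), U q a c m (t+1) + U q a c m 0
        = ∑ s ∈ Finset.range (m+1), U q a c m s := by
      rw [← Finset.sum_range_succ' (U q a c m) (m+1), Finset.sum_range_succ, hUlast, add_zero]
    have rearr : ∑ t ∈ Finset.range (m+1), U q a c m (t+1) -
          ∑ t ∈ Finset.range (m+1), V q a c m t + U q a c m 0
        = (∑ t ∈ Finset.range (m+1), U q a c m (t+1) + U q a c m 0) -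
          ∑ t ∈ Finset.range (m+1), V q a c m t := by ring
    rw [rearr, key, ← Finset.sum_sub_distrib]
    have huv : ∀ s ∈ Finset.range (m+1), U q a c m s - V q a c m s
        = q ^ c * ((-1:ℚ)^s * q ^ (s.choose 2) * gauss q (m:ℤ) s *
            gauss q (a - 1 - (s:ℤ)) (c - s)) :=
      fun s hs => uv hq hc a (Nat.lt_succ_iff.mp (Finset.mem_range.mp hs))
    rw [Finset.sum_congr rfl huv, ← Finset.mul_sum, ih c hc' (a-1)]
    rw [show a - 1 - (m:ℤ) = a - ((m+1:ℕ):ℤ) from by push_cast; ring]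
    rw [← mul_assoc, ← pow_add, show c + m * c = (m+1) * c from by ring]

end GaussAux

theorem gauss_alt_sum_corollary (q : ℚ) (hq : 1 < q) (m a : ℕ) (ham : m ≤ a) :
    ∑ s ∈ Finset.range (m + 1),
        (-1 : ℚ) ^ s * q ^ (s.choose 2) * gauss q (m : ℤ) s *
          gauss q ((a : ℤ) - (s : ℤ)) (a - m) =
      q ^ (m ^ 2) * gauss q ((a : ℤ) - (m : ℤ)) m := by
  have h1 : ∀ s ∈ Finset.range (m+1),
      (-1 : ℚ) ^ s * q ^ (s.choose 2) * gauss q (m : ℤ) s *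
        gauss q ((a : ℤ) - (s : ℤ)) (a - m)
      = (-1 : ℚ) ^ s * q ^ (s.choose 2) * gauss q (m : ℤ) s *
        gauss q ((a : ℤ) - (s : ℤ)) (m - s) := by
    intro s hs
    rw [GaussAux.sym hq (Nat.lt_succ_iff.mp (Finset.mem_range.mp hs)) ham]
  rw [Finset.sum_congr rfl h1, GaussAux.main hq m m le_rfl (a:ℤ),
    show m ^ 2 = m * m from sq m]
end
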